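/- For any integer K ≥ 1, letting E := { z ∈ M_1^{(0),N}(Z_+) : z(i) = 0 for all i ≥ K }, there exists c > 0 such that for all integers t ≥ 1: P_{δ_0}( t < ext ) ≥ c · sup_{z ∈ E} P_z( t < ext ), where δ_0 denotes the state in which all N individuals carry 0 mutations and ext = inf{ t ≥ 0 : Z^N(t)(0) = 0 }. -/

import Mathlib

open scoped BigOperators Classical

noncomputable section

namespace MullerRatchet

/-- A population state: counts of individuals per number of deleterious mutations,
totalling `N` individuals.  This is the (count version of the) space `M_1^N(Z_+)`. -/
def State (N : ℕ) : Type := {z : ℕ →₀ ℕ // z.sum (fun _ n => n) = N}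

/-- Total selective weight `Σ_i z(i) (1-α)^i` of a population. -/
def totalWeight (N : ℕ) (α : ℝ) (z : State N) : ℝ :=
  z.1.sum fun i n => (n : ℝ) * (1 - α) ^ i

/-- Probability that one offspring chooses a parent carrying `i` mutations. -/
def parentProb (N : ℕ) (α : ℝ) (z : State N) (i : ℕ) : ℝ :=
  ((z.1 i : ℝ) * (1 - α) ^ i) / totalWeight N α z

/-- The Poisson(`lam`) probability mass function. -/
def poissonPMF (lam : ℝ) (k : ℕ) : ℝ :=
  Real.exp (-lam) * lam ^ k / (Nat.factorial k : ℝ)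

/-- Law of the number of mutations of one offspring: parent's type `i` plus an
independent Poisson(`lam`) number of new mutations. -/
def offspringProb (N : ℕ) (α lam : ℝ) (z : State N) (m : ℕ) : ℝ :=
  ∑ i ∈ Finset.range (m + 1), parentProb N α z i * poissonPMF lam (m - i)

/-- Empirical counts of the types of the `N` offspring. -/
def empCount (N : ℕ) (f : Fin N → ℕ) (m : ℕ) : ℕ :=
  (Finset.univ.filter fun n => f n = m).card

/-- One-step transition probability `P_z(Z^N(1) = y)` of Haigh's Muller-ratchet chain:
the `N` offspring choose their types independently according to `offspringProb`. -/
def step (N : ℕ) (α lam : ℝ) (z y : State N) : ℝ :=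
  ∑' f : Fin N → ℕ,
    if ∀ m, y.1 m = empCount N f m then ∏ n : Fin N, offspringProb N α lam z (f n) else 0


/-- One-step kernel killed at the clicking time (`y(0) = 0`):
`p(z,y) = P_z(Z^N(1) = y, 1 < ext)`. -/
def stepKilled (N : ℕ) (α lam : ℝ) (z y : State N) : ℝ :=
  if 1 ≤ y.1 0 then step N α lam z y else 0

/-- Iterates of the killed kernel. -/
def iterKilled (N : ℕ) (α lam : ℝ) : ℕ → State N → State N → ℝ
  | 0, z, y => if z = y then 1 else 0
  | t + 1, z, y => ∑' w : State N, stepKilled N α lam z w * iterKilled N α lam t w y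

/-- Survival probability `P_z(t < ext)` for `z ∈ M_1^{(0),N}(Z_+)`. -/
def surv (N : ℕ) (α lam : ℝ) (t : ℕ) (z : State N) : ℝ :=
  ∑' y : State N, iterKilled N α lam t z y

/-- The state in which all `N` individuals carry `0` mutations. -/
def deltaZero (N : ℕ) : State N :=
  ⟨Finsupp.single 0 N, by simp⟩

/-!
From `δ₀` the chain moves in one step, without clicking, to any state `z` supported on
`{0, …, K - 1}` with probability at least `c ^ N`, where `c = min_{m < K} π_λ(m)`: list the
types of `z` as `f : Fin N → ℕ`, and let offspring `n` pick a mutation-free parent and acquire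
exactly `f n` mutations. Since `t ↦ P_z(t < ext)` is nonincreasing, the Markov property gives
`P_{δ₀}(t < ext) ≥ P_{δ₀}(Z(1) = z, 1 < ext) · P_z(t - 1 < ext) ≥ c ^ N · P_z(t < ext)`.

The killed kernel and its iterates are handled in `ℝ≥0∞`, where every series converges; `surv`
is recovered through `toReal` because the kernel is sub-Markov.
-/

open ENNReal

lemma tsum_ofReal_eq_one {ι : Type*} {f : ι → ℝ} (hf : HasSum f 1) (hf0 : ∀ i, 0 ≤ f i) :
    ∑' i, ENNReal.ofReal (f i) = 1 := by
  rw [← ENNReal.ofReal_tsum_of_nonneg hf0 hf.summable, hf.tsum_eq, ENNReal.ofReal_one]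

lemma hasSum_sum_range_mul_of_nonneg {f g : ℕ → ℝ} {a b : ℝ} (hf : HasSum f a)
    (hg : HasSum g b) (hf0 : 0 ≤ f) (hg0 : 0 ≤ g) :
    HasSum (fun n => ∑ k ∈ Finset.range (n + 1), f k * g (n - k)) (a * b) := by
  have hfg := hf.summable.mul_of_nonneg hg.summable hf0 hg0
  have h := (summable_sum_mul_range_of_summable_mul hfg).hasSum
  rwa [← hf.summable.tsum_mul_tsum_eq_tsum_sum_range hg.summable hfg, hf.tsum_eq, hg.tsum_eq] at h

lemma ENNReal.tsum_pow_eq_tsum_prod {β : Type*} (G : β → ℝ≥0∞) (n : ℕ) :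
    (∑' b, G b) ^ n = ∑' f : Fin n → β, ∏ i, G (f i) := by
  induction n with
  | zero => simp
  | succ n ih =>
    calc (∑' b, G b) ^ (n + 1) = ∑' (b) (f : Fin n → β), G b * ∏ i, G (f i) := by
          simp only [pow_succ', ih, ENNReal.tsum_mul_left, ENNReal.tsum_mul_right]
      _ = ∑' p : β × (Fin n → β), G p.1 * ∏ i, G (p.2 i) := ENNReal.tsum_prod.symm
      _ = ∑' f : Fin (n + 1) → β, ∏ i, G (f i) := by
          rw [← (Fin.consEquiv fun _ => β).tsum_eq]
          simp [Fin.prod_univ_succ]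

section KernelIterates

variable {S : Type*} (P : S → S → ℝ≥0∞)

def kernelIter : ℕ → S → S → ℝ≥0∞
  | 0, z, y => if z = y then 1 else 0
  | t + 1, z, y => ∑' w, P z w * kernelIter t w y

def kernelMass (t : ℕ) (z : S) : ℝ≥0∞ :=
  ∑' y, kernelIter P t z y

lemma kernelMass_zero (z : S) : kernelMass P 0 z = 1 := by
  simp [kernelMass, kernelIter]

lemma kernelMass_succ (t : ℕ) (z : S) :
    kernelMass P (t + 1) z = ∑' w, P z w * kernelMass P t w := by
  simp only [kernelMass, kernelIter]
  rw [ENNReal.tsum_comm]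
  simp only [ENNReal.tsum_mul_left]

lemma mul_kernelMass_le_kernelMass_succ (t : ℕ) (z w : S) :
    P z w * kernelMass P t w ≤ kernelMass P (t + 1) z := by
  rw [kernelMass_succ]
  exact ENNReal.le_tsum w

variable {P}

lemma kernelMass_le_one (hP : ∀ z, ∑' y, P z y ≤ 1) (t : ℕ) (z : S) : kernelMass P t z ≤ 1 := by
  induction t generalizing z with
  | zero => rw [kernelMass_zero]
  | succ t ih =>
    calc kernelMass P (t + 1) z ≤ ∑' w, P z w * 1 := by
          rw [kernelMass_succ]
          exact ENNReal.tsum_le_tsum fun w => mul_le_mul' le_rfl (ih w)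
      _ ≤ 1 := by simpa using hP z

lemma kernelMass_succ_le (hP : ∀ z, ∑' y, P z y ≤ 1) (t : ℕ) (z : S) :
    kernelMass P (t + 1) z ≤ kernelMass P t z := by
  induction t generalizing z with
  | zero => simpa [kernelMass_zero] using kernelMass_le_one hP 1 z
  | succ t ih =>
    rw [kernelMass_succ, kernelMass_succ P t]
    exact ENNReal.tsum_le_tsum fun w => mul_le_mul' le_rfl (ih w)

lemma kernelIter_ne_top (hP : ∀ z, ∑' y, P z y ≤ 1) (t : ℕ) (z y : S) :
    kernelIter P t z y ≠ ∞ :=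
  ne_top_of_le_ne_top one_ne_top ((ENNReal.le_tsum y).trans (kernelMass_le_one hP t z))

end KernelIterates

section OffspringLaw

variable {N : ℕ} {α lam : ℝ}

lemma poissonPMF_pos (hlam : 0 < lam) (k : ℕ) : 0 < poissonPMF lam k := by
  unfold poissonPMF
  positivity

lemma hasSum_poissonPMF (hlam : 0 ≤ lam) : HasSum (poissonPMF lam) 1 := by
  show HasSum (fun k => Real.exp (-lam) * lam ^ k / (k.factorial : ℝ)) 1
  simpa [hlam] using ProbabilityTheory.hasSum_one_poissonMeasure lam.toNNReal

lemma totalWeight_pos (hN : 1 ≤ N) (hα1 : α < 1) (z : State N) : 0 < totalWeight N α z := by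
  have hsupp : z.1.support.Nonempty := by
    rw [Finset.nonempty_iff_ne_empty, Ne, Finsupp.support_eq_empty]
    rintro hz
    have := z.2
    simp only [hz, Finsupp.sum_zero_index] at this
    omega
  refine Finset.sum_pos (fun i hi => mul_pos ?_ (pow_pos (by linarith) i)) hsupp
  exact_mod_cast Nat.pos_of_ne_zero (Finsupp.mem_support_iff.mp hi)

lemma parentProb_nonneg (hN : 1 ≤ N) (hα1 : α < 1) (z : State N) (i : ℕ) :
    0 ≤ parentProb N α z i :=
  div_nonneg (mul_nonneg (Nat.cast_nonneg _) (pow_nonneg (by linarith) i))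
    (totalWeight_pos hN hα1 z).le

lemma hasSum_parentProb (hN : 1 ≤ N) (hα1 : α < 1) (z : State N) :
    HasSum (parentProb N α z) 1 := by
  have hsum : ∑ i ∈ z.1.support, parentProb N α z i = 1 := by
    simp only [parentProb, ← Finset.sum_div]
    exact div_self (totalWeight_pos hN hα1 z).ne'
  exact hsum ▸ hasSum_sum_of_ne_finset_zero fun i hi => by
    simp [parentProb, Finsupp.notMem_support_iff.mp hi]

lemma offspringProb_nonneg (hN : 1 ≤ N) (hα1 : α < 1) (hlam : 0 < lam) (z : State N) (m : ℕ) :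
    0 ≤ offspringProb N α lam z m :=
  Finset.sum_nonneg fun i _ =>
    mul_nonneg (parentProb_nonneg hN hα1 z i) (poissonPMF_pos hlam _).le

lemma hasSum_offspringProb (hN : 1 ≤ N) (hα1 : α < 1) (hlam : 0 < lam) (z : State N) :
    HasSum (offspringProb N α lam z) 1 := by
  have h := hasSum_sum_range_mul_of_nonneg (hasSum_parentProb hN hα1 z)
    (hasSum_poissonPMF hlam.le) (parentProb_nonneg hN hα1 z) fun k => (poissonPMF_pos hlam k).le
  rwa [one_mul] at h

lemma parentProb_deltaZero_zero (hN : 1 ≤ N) : parentProb N α (deltaZero N) 0 = 1 := by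
  have hN' : (N : ℝ) ≠ 0 := by exact_mod_cast (show N ≠ 0 by omega)
  simp [parentProb, totalWeight, deltaZero, hN']

lemma poissonPMF_le_offspringProb_deltaZero (hN : 1 ≤ N) (hα1 : α < 1) (hlam : 0 < lam)
    (m : ℕ) : poissonPMF lam m ≤ offspringProb N α lam (deltaZero N) m := by
  have h0 := Finset.single_le_sum
    (f := fun i => parentProb N α (deltaZero N) i * poissonPMF lam (m - i))
    (fun i _ => mul_nonneg (parentProb_nonneg hN hα1 _ i) (poissonPMF_pos hlam (m - i)).le)
    (Finset.mem_range.mpr m.succ_pos)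
  simpa [parentProb_deltaZero_zero hN, offspringProb] using h0

end OffspringLaw

section Empirical

variable {N : ℕ}

lemma empCount_eq_count (f : Fin N → ℕ) (m : ℕ) :
    empCount N f m = Multiset.count m (Finset.univ.val.map f) := by
  rw [Multiset.count_map, empCount, Finset.card_def, Finset.filter_val]
  simp only [eq_comm]

lemma State.ext {y z : State N} (h : ∀ m, y.1 m = z.1 m) : y = z :=
  Subtype.ext (Finsupp.ext h)

def empState (f : Fin N → ℕ) : State N :=
  ⟨Multiset.toFinsupp (Finset.univ.val.map f), by
    have h := Finsupp.card_toMultiset (Multiset.toFinsupp (Finset.univ.val.map f))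
    rw [Multiset.toFinsupp_toMultiset, Multiset.card_map] at h
    exact h.symm.trans (Finset.card_fin N)⟩

lemma empState_apply (f : Fin N → ℕ) (m : ℕ) : (empState f).1 m = empCount N f m := by
  rw [empCount_eq_count]
  rfl

lemma exists_realization (z : State N) : ∃ f : Fin N → ℕ, ∀ m, z.1 m = empCount N f m := by
  obtain ⟨l, hl⟩ : ∃ l : List ℕ, (l : Multiset ℕ) = Finsupp.toMultiset z.1 :=
    ⟨_, Multiset.coe_toList _⟩
  have hlen : l.length = N := by
    rw [← Multiset.coe_card, hl, Finsupp.card_toMultiset]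
    exact z.2
  subst hlen
  refine ⟨l.get, fun m => ?_⟩
  rw [empCount_eq_count, Fin.univ_val_map, List.ofFn_get, hl]
  exact (Finsupp.count_toMultiset z.1 m).symm

lemma realization_apply_ne_zero {z : State N} {f : Fin N → ℕ}
    (hf : ∀ m, z.1 m = empCount N f m) (n : Fin N) : z.1 (f n) ≠ 0 := by
  rw [hf, empCount, ← Nat.pos_iff_ne_zero, Finset.card_pos]
  exact ⟨n, by simp⟩

end Empirical

section Chain

variable {N : ℕ} {α lam : ℝ}

def stepENN (N : ℕ) (α lam : ℝ) (z y : State N) : ℝ≥0∞ :=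
  ∑' f : Fin N → ℕ,
    if ∀ m, y.1 m = empCount N f m then
      ∏ n, ENNReal.ofReal (offspringProb N α lam z (f n)) else 0

def stepKilledENN (N : ℕ) (α lam : ℝ) (z y : State N) : ℝ≥0∞ :=
  if 1 ≤ y.1 0 then stepENN N α lam z y else 0

lemma tsum_stepENN (hN : 1 ≤ N) (hα1 : α < 1) (hlam : 0 < lam) (z : State N) :
    ∑' y, stepENN N α lam z y = 1 := by
  have hfiber : ∀ f : Fin N → ℕ, ∀ a : ℝ≥0∞,
      ∑' y : State N, (if ∀ m, y.1 m = empCount N f m then a else 0) = a := fun f a => by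
    rw [tsum_eq_single (empState f) fun y hy => if_neg fun h =>
      hy (State.ext fun m => (h m).trans (empState_apply f m).symm)]
    exact if_pos (empState_apply f)
  unfold stepENN
  rw [ENNReal.tsum_comm]
  simp only [hfiber]
  rw [← ENNReal.tsum_pow_eq_tsum_prod fun m => ENNReal.ofReal (offspringProb N α lam z m),
    tsum_ofReal_eq_one (hasSum_offspringProb hN hα1 hlam z)
    (offspringProb_nonneg hN hα1 hlam z), one_pow]

lemma tsum_stepKilledENN_le_one (hN : 1 ≤ N) (hα1 : α < 1) (hlam : 0 < lam) (z : State N) :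
    ∑' y, stepKilledENN N α lam z y ≤ 1 := by
  refine (ENNReal.tsum_le_tsum fun y => ?_).trans (tsum_stepENN hN hα1 hlam z).le
  unfold stepKilledENN
  split_ifs <;> simp

lemma step_eq_toReal (hN : 1 ≤ N) (hα1 : α < 1) (hlam : 0 < lam) (z y : State N) :
    step N α lam z y = (stepENN N α lam z y).toReal := by
  rw [stepENN, ENNReal.tsum_toReal_eq fun f => by split_ifs <;> simp [ENNReal.prod_ne_top]]
  refine tsum_congr fun f => ?_
  split_ifs
  · rw [ENNReal.toReal_prod, Finset.prod_congr rfl fun n _ =>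
      ENNReal.toReal_ofReal (offspringProb_nonneg hN hα1 hlam z (f n))]
  · rfl

lemma iterKilled_eq_toReal (hN : 1 ≤ N) (hα1 : α < 1) (hlam : 0 < lam) (t : ℕ) (z y : State N) :
    iterKilled N α lam t z y = (kernelIter (stepKilledENN N α lam) t z y).toReal := by
  induction t generalizing z with
  | zero => simp only [iterKilled, kernelIter]; split_ifs <;> rfl
  | succ t ih =>
    have hstep : ∀ w, stepKilled N α lam z w = (stepKilledENN N α lam z w).toReal := fun w => by
      unfold stepKilled stepKilledENN
      split_ifs
      · exact step_eq_toReal hN hα1 hlam z w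
      · rfl
    simp only [iterKilled, kernelIter, hstep, ih]
    rw [ENNReal.tsum_toReal_eq fun w => ENNReal.mul_ne_top ?_
      (kernelIter_ne_top (tsum_stepKilledENN_le_one hN hα1 hlam) t w y)]
    · simp only [ENNReal.toReal_mul]
    · exact ne_top_of_le_ne_top one_ne_top
        ((ENNReal.le_tsum w).trans (tsum_stepKilledENN_le_one hN hα1 hlam z))

lemma surv_eq_toReal (hN : 1 ≤ N) (hα1 : α < 1) (hlam : 0 < lam) (t : ℕ) (z : State N) :
    surv N α lam t z = (kernelMass (stepKilledENN N α lam) t z).toReal := by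
  rw [surv, kernelMass, ENNReal.tsum_toReal_eq
    (kernelIter_ne_top (tsum_stepKilledENN_le_one hN hα1 hlam) t z)]
  exact tsum_congr (iterKilled_eq_toReal hN hα1 hlam t z)

end Chain

lemma ofReal_pow_le_stepKilledENN_deltaZero {N : ℕ} {α lam : ℝ} (hN : 1 ≤ N) (hα1 : α < 1)
    (hlam : 0 < lam) {c : ℝ} {K : ℕ} (hc : ∀ m < K, c ≤ poissonPMF lam m) {z : State N}
    (hz0 : 1 ≤ z.1 0) (hzK : ∀ i, K ≤ i → z.1 i = 0) :
    ENNReal.ofReal c ^ N ≤ stepKilledENN N α lam (deltaZero N) z := by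
  obtain ⟨f, hf⟩ := exists_realization z
  have hfK : ∀ n, f n < K := fun n =>
    not_le.mp fun h => realization_apply_ne_zero hf n (hzK (f n) h)
  rw [stepKilledENN, if_pos hz0]
  calc ENNReal.ofReal c ^ N = ∏ _n : Fin N, ENNReal.ofReal c := by simp
    _ ≤ ∏ n, ENNReal.ofReal (offspringProb N α lam (deltaZero N) (f n)) :=
        Finset.prod_le_prod' fun n _ => ENNReal.ofReal_le_ofReal <|
          (hc _ (hfK n)).trans (poissonPMF_le_offspringProb_deltaZero hN hα1 hlam _)
    _ ≤ stepENN N α lam (deltaZero N) z := by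
        refine le_trans ?_ (ENNReal.le_tsum f)
        rw [if_pos hf]

theorem statement3_general (N : ℕ) (hN : 1 ≤ N) (α lam : ℝ)
    (hα1 : α < 1) (hlam : 0 < lam)
    (K : ℕ) (hK : 1 ≤ K) :
    ∃ c : ℝ, 0 < c ∧ ∀ t : ℕ, 1 ≤ t →
      ∀ z : State N, (1 ≤ z.1 0 ∧ ∀ i, K ≤ i → z.1 i = 0) →
        c * surv N α lam t z ≤ surv N α lam t (deltaZero N) := by
  set c := (Finset.range K).inf' (Finset.nonempty_range_iff.mpr (by omega)) (poissonPMF lam)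
  have hc : ∀ m < K, c ≤ poissonPMF lam m := fun m hm =>
    Finset.inf'_le _ (Finset.mem_range.mpr hm)
  have hc_pos : 0 < c := (Finset.lt_inf'_iff _).mpr fun m _ => poissonPMF_pos hlam m
  refine ⟨c ^ N, pow_pos hc_pos N, fun t ht z ⟨hz0, hzK⟩ => ?_⟩
  obtain ⟨s, rfl⟩ := Nat.exists_eq_add_of_le' ht
  have hP := tsum_stepKilledENN_le_one hN hα1 hlam
  rw [surv_eq_toReal hN hα1 hlam, surv_eq_toReal hN hα1 hlam,
    ← ENNReal.toReal_ofReal (pow_pos hc_pos N).le, ← ENNReal.toReal_mul,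
    ENNReal.ofReal_pow hc_pos.le]
  refine ENNReal.toReal_mono (ne_top_of_le_ne_top one_ne_top (kernelMass_le_one hP _ _)) ?_
  calc ENNReal.ofReal c ^ N * kernelMass (stepKilledENN N α lam) (s + 1) z
      ≤ stepKilledENN N α lam (deltaZero N) z * kernelMass (stepKilledENN N α lam) s z :=
        mul_le_mul' (ofReal_pow_le_stepKilledENN_deltaZero hN hα1 hlam hc hz0 hzK)
          (kernelMass_succ_le hP s z)
    _ ≤ kernelMass (stepKilledENN N α lam) (s + 1) (deltaZero N) :=
        mul_kernelMass_le_kernelMass_succ _ s _ z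

/-- for any `K ≥ 1`, with `E = { z ∈ M_1^{(0),N} : z(i) = 0 ∀ i ≥ K }`,
there is `c > 0` such that for all integers `t ≥ 1`,
`P_{δ_0}(t < ext) ≥ c · sup_{z ∈ E} P_z(t < ext)`. -/
theorem statement3 (N : ℕ) (hN : 1 ≤ N) (α lam : ℝ)
    (hα0 : 0 < α) (hα1 : α < 1) (hlam : 0 < lam)
    (K : ℕ) (hK : 1 ≤ K) :
    ∃ c : ℝ, 0 < c ∧ ∀ t : ℕ, 1 ≤ t →
      ∀ z : State N, (1 ≤ z.1 0 ∧ ∀ i, K ≤ i → z.1 i = 0) →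
        c * surv N α lam t z ≤ surv N α lam t (deltaZero N) :=
  statement3_general N hN α lam hα1 hlam K hK

end MullerRatchet
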